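/- arXiv:2208.04276 — 3 statements merged into one kernel-verified Lean document; each statement's English description precedes it below -/
import Mathlib

section
/- Suppose the boundary matrix B is an M-matrix. Then for every diagonal matrix 𝒦 with positive diagonal entries there exists a positive diagonal matrix P such that for every matrix Υ satisfying the interval bounds and every x ∈ ℝ^m with x ≠ 0 one has sign(x)ᵀ P Υ 𝒦 x = Σ_{i,j} sign(x_i) · (P Υ 𝒦)_{ij} · x_j > 0, where sign is applied componentwise with sign(0) = 0. (This is the case l = −1 of the gain-design condition, which can be met for an arbitrary positive diagonal gain 𝒦.) -/
open Matrix BigOperators Finset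

/-- A real square matrix is an M-matrix if all off-diagonal entries are nonpositive and
every eigenvalue (complex root of the characteristic polynomial) has positive real part. -/
def IsMMatrix {m : ℕ} (A : Matrix (Fin m) (Fin m) ℝ) : Prop :=
  (∀ i j, i ≠ j → A i j ≤ 0) ∧
  ∀ z : ℂ, (A.map Complex.ofReal).charpoly.IsRoot z → 0 < z.re

/-- Υ satisfies the interval bounds. -/
def SatisfiesBounds {m : ℕ} (lo : Fin m → ℝ) (hi : Fin m → Fin m → ℝ)
    (Υ : Matrix (Fin m) (Fin m) ℝ) : Prop :=
  (∀ i, lo i ≤ Υ i i) ∧ ∀ i j, |Υ i j| ≤ hi i j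

/-- The boundary matrix of the interval bounds. -/
def boundaryMatrix {m : ℕ} (lo : Fin m → ℝ) (hi : Fin m → Fin m → ℝ) :
    Matrix (Fin m) (Fin m) ℝ :=
  Matrix.of fun i j => if i = j then lo i else -hi i j

section Aux

open Polynomial Filter Topology ENNReal
open scoped NNReal
set_option linter.unusedSectionVars false
set_option maxHeartbeats 1000000

attribute [local instance] Matrix.linftyOpNormedAddCommGroup Matrix.linftyOpNormedRing
  Matrix.linftyOpNormedAlgebra

variable {m : ℕ} [NeZero m]

example : CompleteSpace (Matrix (Fin m) (Fin m) ℂ) := by infer_instance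

omit [NeZero m] in
lemma eval_charpoly' {K : Type*} [Field K] (M : Matrix (Fin m) (Fin m) K) (z : K) :
    M.charpoly.eval z = (z • (1 : Matrix (Fin m) (Fin m) K) - M).det := by
  rw [Matrix.charpoly, ← Polynomial.coe_evalRingHom, RingHom.map_det]
  congr 1
  ext i j
  by_cases h : i = j <;>
    simp [h, charmatrix_apply, Matrix.one_apply, Matrix.smul_apply, Matrix.sub_apply]

lemma mem_spectrum_iff_root {M : Matrix (Fin m) (Fin m) ℂ} {z : ℂ} :
    z ∈ spectrum ℂ M ↔ M.charpoly.IsRoot z := by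
  simp [spectrum.mem_iff, Algebra.algebraMap_eq_smul_one, Matrix.isUnit_iff_isUnit_det,
    IsRoot, eval_charpoly', isUnit_iff_ne_zero]

omit [NeZero m] in
lemma charpoly_transpose' {K : Type*} [Field K] (M : Matrix (Fin m) (Fin m) K) :
    M.transpose.charpoly = M.charpoly := by
  rw [Matrix.charpoly, Matrix.charpoly, ← Matrix.det_transpose (charmatrix M)]
  congr 1
  ext i j
  by_cases h : i = j
  · simp [h, charmatrix_apply, Matrix.transpose_apply]
  · simp [h, Ne.symm h, charmatrix_apply, Matrix.transpose_apply]

variable {m : ℕ} [NeZero m]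

lemma eventually_pow_norm_le (Nc : Matrix (Fin m) (Fin m) ℂ) {r : ℝ≥0}
    (h : spectralRadius ℂ Nc < r) : ∀ᶠ n : ℕ in atTop, ‖Nc ^ n‖₊ ≤ r ^ n := by
  have hg := spectrum.pow_nnnorm_pow_one_div_tendsto_nhds_spectralRadius Nc
  have hev : ∀ᶠ n : ℕ in atTop, (‖Nc ^ n‖₊ : ℝ≥0∞) ^ (1/(n:ℝ)) < r :=
    hg.eventually_lt_const h
  filter_upwards [hev, eventually_ge_atTop 1] with n hn hn1
  have hne : (n:ℝ) ≠ 0 := by positivity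
  have : ((‖Nc ^ n‖₊ : ℝ≥0∞) ^ (1/(n:ℝ))) ^ (n:ℝ) ≤ (r : ℝ≥0∞) ^ (n:ℝ) :=
    ENNReal.rpow_le_rpow hn.le (by positivity)
  rw [← ENNReal.rpow_mul, one_div_mul_cancel hne, ENNReal.rpow_one,
    ENNReal.rpow_natCast] at this
  exact_mod_cast this

lemma pow_div_tendsto (Nc : Matrix (Fin m) (Fin m) ℂ) {lam : ℝ} (hl : 0 < lam)
    (h : spectralRadius ℂ Nc < ENNReal.ofReal lam) :
    Tendsto (fun n : ℕ => ‖Nc ^ n‖ / lam ^ n) atTop (𝓝 0) := by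
  obtain ⟨r, hr1, hr2⟩ := ENNReal.lt_iff_exists_nnreal_btwn.mp h
  have hrl : (r : ℝ) < lam := by
    have := (ENNReal.ofReal_lt_ofReal_iff hl).mp (by rwa [ENNReal.ofReal_coe_nnreal])
    exact this
  have hev := eventually_pow_norm_le Nc hr1
  have h0 : Tendsto (fun n : ℕ => ((r:ℝ)/lam) ^ n) atTop (𝓝 0) := by
    apply _root_.tendsto_pow_atTop_nhds_zero_of_lt_one (by positivity) (by
      rw [div_lt_one hl]; exact hrl)
  refine squeeze_zero' (by filter_upwards with n; positivity) ?_ h0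
  filter_upwards [hev] with n hn
  rw [div_pow, div_le_div_iff_of_pos_right (by positivity)]
  calc ‖Nc ^ n‖ ≤ ((r ^ n : ℝ≥0) : ℝ) := hn
    _ = (r:ℝ)^n := by push_cast; ring

lemma entry_le_norm (A : Matrix (Fin m) (Fin m) ℂ) (i j : Fin m) : ‖A i j‖ ≤ ‖A‖ := by
  have h : ‖A i j‖₊ ≤ ‖A‖₊ := by
    rw [Matrix.linfty_opNNNorm_def]
    exact le_trans (Finset.single_le_sum (f := fun j => ‖A i j‖₊)
      (fun _ _ => zero_le) (Finset.mem_univ j)) (Finset.le_sup (f := fun i => ∑ j, ‖A i j‖₊) (Finset.mem_univ i))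
  exact_mod_cast h

lemma map_pow_ofReal (N : Matrix (Fin m) (Fin m) ℝ) (n : ℕ) :
    (N ^ n).map Complex.ofReal = (N.map Complex.ofReal) ^ n := by
  have := map_pow (Complex.ofRealHom.mapMatrix (m := Fin m)) N n
  simpa [RingHom.mapMatrix_apply, show (⇑Complex.ofRealHom) = Complex.ofReal from rfl] using this

lemma pow_entry_nonneg (N : Matrix (Fin m) (Fin m) ℝ) (hN : ∀ i j, 0 ≤ N i j) :
    ∀ (k : ℕ) (i j : Fin m), 0 ≤ (N ^ k) i j := by
  intro k
  induction k with
  | zero => intro i j; by_cases h : i = j <;> simp [pow_zero, Matrix.one_apply, h]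
  | succ k ih =>
    intro i j
    rw [pow_succ, Matrix.mul_apply]
    exact Finset.sum_nonneg fun l _ => mul_nonneg (ih i l) (hN l j)

lemma geom_identity (N : Matrix (Fin m) (Fin m) ℝ) {lam : ℝ} (hl : lam ≠ 0) (n : ℕ) :
    (lam • (1 : Matrix (Fin m) (Fin m) ℝ) - N) *
      (∑ k ∈ Finset.range n, (lam⁻¹) ^ (k + 1) • N ^ k) =
      1 - (lam⁻¹) ^ n • N ^ n := by
  induction n with
  | zero => simp
  | succ n ih =>
    rw [Finset.sum_range_succ, Matrix.mul_add, ih, Matrix.sub_mul, Matrix.mul_smul,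
      Matrix.smul_mul, Matrix.one_mul]
    have h1 : lam⁻¹ ^ (n + 1) * lam = lam⁻¹ ^ n := by
      rw [pow_succ, mul_assoc, inv_mul_cancel₀ hl, mul_one]
    rw [smul_smul, h1, mul_smul_comm, ← pow_succ']
    abel

lemma inv_entries_nonneg (N : Matrix (Fin m) (Fin m) ℝ) (hN : ∀ i j, 0 ≤ N i j)
    {lam : ℝ} (hl : 0 < lam)
    (hdet : IsUnit (lam • (1 : Matrix (Fin m) (Fin m) ℝ) - N).det)
    (hten : Tendsto (fun n : ℕ => ‖(N.map Complex.ofReal) ^ n‖ / lam ^ n) atTop (𝓝 0)) :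
    ∀ i j, 0 ≤ (lam • (1 : Matrix (Fin m) (Fin m) ℝ) - N)⁻¹ i j := by
  set A := lam • (1 : Matrix (Fin m) (Fin m) ℝ) - N with hA
  set S : ℕ → Matrix (Fin m) (Fin m) ℝ :=
    fun n => ∑ k ∈ Finset.range n, (lam⁻¹) ^ (k + 1) • N ^ k with hS
  have hSnn : ∀ n i j, 0 ≤ S n i j := by
    intro n i j
    rw [hS]
    simp only [Matrix.sum_apply, Matrix.smul_apply, smul_eq_mul]
    exact Finset.sum_nonneg fun k _ =>
      mul_nonneg (by positivity) (pow_entry_nonneg N hN k i j)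
  have hid : ∀ n, S n = A⁻¹ - (lam⁻¹) ^ n • (A⁻¹ * N ^ n) := by
    intro n
    have h1 : A * S n = 1 - (lam⁻¹) ^ n • N ^ n := geom_identity N hl.ne' n
    calc S n = (A⁻¹ * A) * S n := by rw [Matrix.nonsing_inv_mul _ hdet, Matrix.one_mul]
      _ = A⁻¹ * (A * S n) := by rw [Matrix.mul_assoc]
      _ = A⁻¹ - (lam⁻¹) ^ n • (A⁻¹ * N ^ n) := by
          rw [h1, Matrix.mul_sub, Matrix.mul_one, Matrix.mul_smul]
  intro i j
  have hentry : ∀ (n : ℕ) (k l : Fin m), |(N ^ n) k l| ≤ ‖(N.map Complex.ofReal) ^ n‖ := by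
    intro n k l
    have h2 := entry_le_norm ((N.map Complex.ofReal) ^ n) k l
    rw [← map_pow_ofReal, Matrix.map_apply, Complex.norm_real, Real.norm_eq_abs,
      map_pow_ofReal] at h2
    exact h2
  have hterm : Tendsto (fun n : ℕ => ((lam⁻¹) ^ n • (A⁻¹ * N ^ n)) i j) atTop (𝓝 0) := by
    refine squeeze_zero_norm (fun n => ?_)
      (a := fun n : ℕ => (∑ k, |A⁻¹ i k|) * (‖(N.map Complex.ofReal) ^ n‖ / lam ^ n))
      (by simpa using hten.const_mul (∑ k, |A⁻¹ i k|))
    simp only [Matrix.smul_apply, Matrix.mul_apply, smul_eq_mul, Real.norm_eq_abs]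
    rw [abs_mul, abs_pow, abs_inv, abs_of_pos hl]
    calc lam⁻¹ ^ n * |∑ k, A⁻¹ i k * (N ^ n) k j|
        ≤ lam⁻¹ ^ n * ∑ k, |A⁻¹ i k| * ‖(N.map Complex.ofReal) ^ n‖ := by
          apply mul_le_mul_of_nonneg_left _ (by positivity)
          refine le_trans (Finset.abs_sum_le_sum_abs _ _) (Finset.sum_le_sum fun k _ => ?_)
          rw [abs_mul]
          exact mul_le_mul_of_nonneg_left (hentry n k j) (abs_nonneg _)
      _ = (∑ k, |A⁻¹ i k|) * (‖(N.map Complex.ofReal) ^ n‖ / lam ^ n) := by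
          rw [← Finset.sum_mul]
          rw [div_eq_mul_inv, inv_pow]; ring
  have hlim : Tendsto (fun n => S n i j) atTop (𝓝 (A⁻¹ i j)) := by
    have heq : (fun n => S n i j) = fun n => A⁻¹ i j - ((lam⁻¹) ^ n • (A⁻¹ * N ^ n)) i j := by
      funext n; rw [hid n]; simp [Matrix.sub_apply]
    rw [heq]
    simpa using (tendsto_const_nhds (x := A⁻¹ i j)).sub hterm
  exact ge_of_tendsto hlim (Filter.Eventually.of_forall fun n => hSnn n i j)

lemma map_smul_one_sub (N : Matrix (Fin m) (Fin m) ℝ) (t : ℝ) :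
    (t • (1 : Matrix (Fin m) (Fin m) ℝ) - N).map Complex.ofReal =
      (t : ℂ) • (1 : Matrix (Fin m) (Fin m) ℂ) - N.map Complex.ofReal := by
  ext i j
  by_cases h : i = j <;>
    simp [h, Matrix.map_apply, Matrix.sub_apply, Matrix.smul_apply, Matrix.one_apply]

lemma det_map_ofReal (M : Matrix (Fin m) (Fin m) ℝ) :
    (M.map Complex.ofReal).det = (M.det : ℂ) := by
  have := RingHom.map_det (Complex.ofRealHom) M
  simpa [RingHom.mapMatrix_apply, show (⇑Complex.ofRealHom) = Complex.ofReal from rfl] using this.symm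

lemma isRoot_charpoly_iff_det (M : Matrix (Fin m) (Fin m) ℂ) (z : ℂ) :
    M.charpoly.IsRoot z ↔ (z • (1 : Matrix (Fin m) (Fin m) ℂ) - M).det = 0 := by
  rw [Polynomial.IsRoot, eval_charpoly']

/-- root transfer: `z` is a root for `N` iff `s - z` is a root for `s•1 - N`. -/
lemma root_transfer (Nc : Matrix (Fin m) (Fin m) ℂ) (s z : ℂ) :
    Nc.charpoly.IsRoot z ↔
      (s • (1 : Matrix (Fin m) (Fin m) ℂ) - Nc).charpoly.IsRoot (s - z) := by
  rw [isRoot_charpoly_iff_det, isRoot_charpoly_iff_det]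
  have h1 : (s - z) • (1 : Matrix (Fin m) (Fin m) ℂ) - (s • 1 - Nc) =
      -(z • (1 : Matrix (Fin m) (Fin m) ℂ) - Nc) := by
    rw [sub_smul]; abel
  rw [h1, Matrix.det_neg, mul_eq_zero]
  simp [pow_eq_zero_iff', neg_ne_zero]

lemma nnnorm_le_of_mem_spectrum {M : Matrix (Fin m) (Fin m) ℂ} {z : ℂ}
    (hz : z ∈ spectrum ℂ M) : (‖z‖₊ : ℝ≥0∞) ≤ spectralRadius ℂ M :=
  le_iSup₂ (f := fun k (_ : k ∈ spectrum ℂ M) => (‖k‖₊ : ℝ≥0∞)) z hz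

lemma det_ne_zero_of_lt (N : Matrix (Fin m) (Fin m) ℝ) {t : ℝ}
    (h : spectralRadius ℂ (N.map Complex.ofReal) < ENNReal.ofReal t) :
    (t • (1 : Matrix (Fin m) (Fin m) ℝ) - N).det ≠ 0 := by
  intro hdet
  have h1 : ((t • (1 : Matrix (Fin m) (Fin m) ℝ) - N).map Complex.ofReal).det = 0 := by
    rw [det_map_ofReal, hdet, Complex.ofReal_zero]
  rw [map_smul_one_sub] at h1
  have h2 : (N.map Complex.ofReal).charpoly.IsRoot (t : ℂ) :=
    (isRoot_charpoly_iff_det _ _).mpr h1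
  have h3 : ((t : ℂ)) ∈ spectrum ℂ (N.map Complex.ofReal) := mem_spectrum_iff_root.mpr h2
  have h4 := (nnnorm_le_of_mem_spectrum h3).trans_lt h
  have h5 : t ≤ ‖(t : ℂ)‖ := by
    rw [Complex.norm_real, Real.norm_eq_abs]; exact le_abs_self t
  have h6 : (ENNReal.ofReal t) ≤ (‖(t : ℂ)‖₊ : ℝ≥0∞) := by
    rw [← enorm_eq_nnnorm, ← ofReal_norm]
    exact ENNReal.ofReal_le_ofReal h5
  exact absurd (h6.trans_lt h4) (lt_irrefl _)

lemma spectral_lt (N : Matrix (Fin m) (Fin m) ℝ) (hN : ∀ i j, 0 ≤ N i j) {s : ℝ} (hs : 0 < s)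
    (hroot : ∀ z : ℂ,
      ((s • (1 : Matrix (Fin m) (Fin m) ℝ) - N).map Complex.ofReal).charpoly.IsRoot z →
        0 < z.re) :
    spectralRadius ℂ (N.map Complex.ofReal) < ENNReal.ofReal s := by
  set Nc := N.map Complex.ofReal with hNc
  -- every root of the charpoly of Nc has real part < s
  have hroot' : ∀ z : ℂ, Nc.charpoly.IsRoot z → z.re < s := by
    intro z hz
    have h1 : ((s : ℂ) • (1 : Matrix (Fin m) (Fin m) ℂ) - Nc).charpoly.IsRoot ((s : ℂ) - z) :=
      (root_transfer Nc (s : ℂ) z).mp hz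
    rw [← map_smul_one_sub] at h1
    have h2 := hroot _ h1
    simp only [Complex.sub_re, Complex.ofReal_re] at h2
    linarith
  -- maximal-modulus element of the spectrum
  obtain ⟨μ, hμmem, hμeq⟩ := spectrum.exists_nnnorm_eq_spectralRadius Nc
  set ρ : ℝ := ‖μ‖ with hρ
  have hρnn : 0 ≤ ρ := norm_nonneg μ
  rw [← hμeq]
  rw [show ((‖μ‖₊ : ℝ≥0∞)) = ENNReal.ofReal ρ from (ofReal_norm μ).symm]
  rw [ENNReal.ofReal_lt_ofReal_iff hs]
  -- it suffices to show ρ < s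
  by_contra hge
  push_neg at hge   -- s ≤ ρ
  have hρpos : 0 < ρ := lt_of_lt_of_le hs hge
  by_cases hcase : Nc.charpoly.IsRoot (ρ : ℂ)
  · have := hroot' _ hcase
    simp only [Complex.ofReal_re] at this
    linarith
  · -- Perron-type contradiction
    have hμroot : Nc.charpoly.IsRoot μ := mem_spectrum_iff_root.mp hμmem
    have hdetμ : (μ • (1 : Matrix (Fin m) (Fin m) ℂ) - Nc).det = 0 :=
      (isRoot_charpoly_iff_det _ _).mp hμroot
    obtain ⟨v, hv0, hv⟩ := (Matrix.exists_mulVec_eq_zero_iff).mpr hdetμ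
    have hvμ : Nc *ᵥ v = μ • v := by
      have := hv
      rw [Matrix.sub_mulVec, Matrix.smul_mulVec, Matrix.one_mulVec, sub_eq_zero] at this
      exact this.symm
    set w : Fin m → ℝ := fun i => ‖v i‖ with hw
    obtain ⟨i0, hi0⟩ : ∃ i, v i ≠ 0 := Function.ne_iff.mp hv0
    have hwi0 : 0 < w i0 := by simpa [hw] using norm_pos_iff.mpr hi0
    have hwnn : ∀ i, 0 ≤ w i := fun i => norm_nonneg _
    have hkey : ∀ i, ρ * w i ≤ ∑ j, N i j * w j := by
      intro i
      have h1 : (μ • v) i = (Nc *ᵥ v) i := by rw [hvμ]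
      have h2 : ρ * w i = ‖(μ • v) i‖ := by
        simp [hw, Pi.smul_apply, norm_smul, hρ]
      rw [h2, h1]
      calc ‖(Nc *ᵥ v) i‖ = ‖∑ j, Nc i j * v j‖ := by rw [Matrix.mulVec, dotProduct]
        _ ≤ ∑ j, ‖Nc i j * v j‖ := norm_sum_le _ _
        _ = ∑ j, N i j * w j := by
            refine Finset.sum_congr rfl fun j _ => ?_
            rw [norm_mul, hNc, Matrix.map_apply, Complex.norm_real, Real.norm_eq_abs,
              abs_of_nonneg (hN i j)]
    -- determinant is nonzero and positive on [ρ, ∞)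
    have hdet_ne : ∀ t : ℝ, ρ ≤ t → (t • (1 : Matrix (Fin m) (Fin m) ℝ) - N).det ≠ 0 := by
      intro t ht hdet
      have h1 : ((t • (1 : Matrix (Fin m) (Fin m) ℝ) - N).map Complex.ofReal).det = 0 := by
        rw [det_map_ofReal, hdet, Complex.ofReal_zero]
      rw [map_smul_one_sub] at h1
      have h2 : Nc.charpoly.IsRoot (t : ℂ) := (isRoot_charpoly_iff_det _ _).mpr h1
      have h3 : ((t : ℂ)) ∈ spectrum ℂ Nc := mem_spectrum_iff_root.mpr h2
      have h4 := nnnorm_le_of_mem_spectrum h3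
      rw [hμeq.symm] at h4
      have h5 : ‖(t:ℂ)‖ ≤ ‖μ‖ := by exact_mod_cast h4
      have h6 : t ≤ ρ := by
        rw [Complex.norm_real, Real.norm_eq_abs, abs_of_nonneg (hρnn.trans ht)] at h5
        exact h5
      have ht' : t = ρ := le_antisymm h6 ht
      rw [ht'] at h2
      exact hcase h2
    -- continuity of the determinant function
    have hcont : Continuous fun t : ℝ => (t • (1 : Matrix (Fin m) (Fin m) ℝ) - N).det :=
      Continuous.matrix_det ((continuous_id.smul continuous_const).sub continuous_const)
    -- the determinant is positive on [ρ, ∞)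
    have hdet_pos : ∀ t : ℝ, ρ ≤ t → 0 < (t • (1 : Matrix (Fin m) (Fin m) ℝ) - N).det := by
      intro t ht
      rcases (hdet_ne t ht).lt_or_gt with hneg | hpos
      · exfalso
        have hmono := Matrix.charpoly_monic N
        have hdeg : 0 < (Matrix.charpoly N).degree := by
          have hnd : (Matrix.charpoly N).natDegree = m := by
            simpa using Matrix.charpoly_natDegree_eq_dim N
          rw [Polynomial.degree_eq_natDegree hmono.ne_zero, hnd]
          exact_mod_cast Nat.pos_of_ne_zero (NeZero.ne m)
        have htop := Polynomial.tendsto_atTop_of_leadingCoeff_nonneg (Matrix.charpoly N) hdeg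
          (by rw [hmono.leadingCoeff]; norm_num)
        obtain ⟨L, hL⟩ := ((htop.eventually_ge_atTop 1).and (eventually_ge_atTop t)).exists
        have hfL : 0 < (L • (1 : Matrix (Fin m) (Fin m) ℝ) - N).det := by
          rw [← eval_charpoly']; linarith [hL.1]
        have h0mem : (0:ℝ) ∈ Set.Icc ((t • (1 : Matrix (Fin m) (Fin m) ℝ) - N).det)
            ((L • (1 : Matrix (Fin m) (Fin m) ℝ) - N).det) := ⟨hneg.le, hfL.le⟩
        obtain ⟨c, hc, hc0⟩ := intermediate_value_Icc hL.2 hcont.continuousOn h0mem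
        exact hdet_ne c (ht.trans hc.1) hc0
      · exact hpos
    -- inverse entries are nonneg for t > ρ
    have hinv : ∀ t : ℝ, ρ < t → ∀ i j, 0 ≤ (t • (1 : Matrix (Fin m) (Fin m) ℝ) - N)⁻¹ i j := by
      intro t htρ
      have hts : spectralRadius ℂ Nc < ENNReal.ofReal t := by
        rw [← hμeq, show ((‖μ‖₊ : ℝ≥0∞)) = ENNReal.ofReal ρ from (ofReal_norm μ).symm]
        exact (ENNReal.ofReal_lt_ofReal_iff (hρpos.trans htρ)).mpr htρ
      exact inv_entries_nonneg N hN (hρpos.trans htρ)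
        (isUnit_iff_ne_zero.mpr (hdet_ne t (le_of_lt htρ)))
        (pow_div_tendsto Nc (hρpos.trans htρ) hts)
    -- adjugate entries are nonneg at ρ by continuity
    have hadj : ∀ i j, 0 ≤ (ρ • (1 : Matrix (Fin m) (Fin m) ℝ) - N).adjugate i j := by
      intro i j
      have hcadj : Continuous fun t : ℝ =>
          ((t • (1 : Matrix (Fin m) (Fin m) ℝ) - N).adjugate) i j := by
        have hA : Continuous fun t : ℝ => (t • (1 : Matrix (Fin m) (Fin m) ℝ) - N) :=
          (continuous_id.smul continuous_const).sub continuous_const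
        have h1 : Continuous fun t : ℝ => (t • (1 : Matrix (Fin m) (Fin m) ℝ) - N).adjugate :=
          hA.matrix_adjugate
        exact (continuous_apply j).comp ((continuous_apply i).comp h1)
      have hseq : Tendsto (fun n : ℕ => ρ + 1/(n+1 : ℝ)) atTop (𝓝 ρ) := by
        simpa using (tendsto_const_nhds (x := ρ)).add tendsto_one_div_add_atTop_nhds_zero_nat
      refine ge_of_tendsto (hcadj.continuousAt.tendsto.comp hseq) ?_
      refine Filter.Eventually.of_forall fun n => ?_
      have htn : ρ < ρ + 1/(n+1 : ℝ) := by
        have : (0:ℝ) < 1/(n+1 : ℝ) := by positivity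
        linarith
      set t := ρ + 1/(n+1 : ℝ) with htdef
      show (0:ℝ) ≤ (t • (1 : Matrix (Fin m) (Fin m) ℝ) - N).adjugate i j
      have hdet_t : 0 < (t • (1 : Matrix (Fin m) (Fin m) ℝ) - N).det := hdet_pos t htn.le
      have hrel : (t • (1 : Matrix (Fin m) (Fin m) ℝ) - N).adjugate i j =
          (t • (1 : Matrix (Fin m) (Fin m) ℝ) - N).det *
            (t • (1 : Matrix (Fin m) (Fin m) ℝ) - N)⁻¹ i j := by
        rw [Matrix.inv_def, Matrix.smul_apply, smul_eq_mul, Ring.inverse_eq_inv']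
        field_simp
      rw [hrel]
      exact mul_nonneg hdet_t.le (hinv t htn i j)
    -- final contradiction via the Perron vector w
    set A := ρ • (1 : Matrix (Fin m) (Fin m) ℝ) - N with hAdef
    have hdetA : IsUnit A.det := isUnit_iff_ne_zero.mpr (hdet_ne ρ le_rfl)
    have hAinv : ∀ i j, 0 ≤ A⁻¹ i j := by
      intro i j
      rw [Matrix.inv_def, Matrix.smul_apply, smul_eq_mul, Ring.inverse_eq_inv']
      exact mul_nonneg (inv_nonneg.mpr (hdet_pos ρ le_rfl).le) (hadj i j)
    have hu : ∀ j, (A *ᵥ w) j ≤ 0 := by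
      intro j
      have h1 : (A *ᵥ w) j = ρ * w j - ∑ k, N j k * w k := by
        simp only [hAdef, Matrix.sub_mulVec, Matrix.smul_mulVec, Matrix.one_mulVec,
          Pi.sub_apply, Pi.smul_apply, smul_eq_mul]
        rw [Matrix.mulVec, dotProduct]
      rw [h1]
      linarith [hkey j]
    have hw_eq : w = A⁻¹ *ᵥ (A *ᵥ w) := by
      rw [Matrix.mulVec_mulVec, Matrix.nonsing_inv_mul _ hdetA, Matrix.one_mulVec]
    have hwle : w i0 ≤ 0 := by
      conv_lhs => rw [hw_eq]
      rw [Matrix.mulVec, dotProduct]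
      refine Finset.sum_nonpos fun j _ => mul_nonpos_of_nonneg_of_nonpos (hAinv i0 j) (hu j)
    linarith

lemma exists_pos_mulVec (N : Matrix (Fin m) (Fin m) ℝ) (hN : ∀ i j, 0 ≤ N i j) {s : ℝ}
    (hs : 0 < s)
    (hroot : ∀ z : ℂ,
      ((s • (1 : Matrix (Fin m) (Fin m) ℝ) - N).map Complex.ofReal).charpoly.IsRoot z →
        0 < z.re) :
    ∃ p : Fin m → ℝ, (∀ i, 0 < p i) ∧
      ∀ j, ((s • (1 : Matrix (Fin m) (Fin m) ℝ) - N) *ᵥ p) j = 1 := by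
  have hsr := spectral_lt N hN hs hroot
  have hdet := det_ne_zero_of_lt N hsr
  have hinv := inv_entries_nonneg N hN hs (isUnit_iff_ne_zero.mpr hdet)
    (pow_div_tendsto _ hs hsr)
  set A := s • (1 : Matrix (Fin m) (Fin m) ℝ) - N with hAdef
  set p := A⁻¹ *ᵥ (fun _ => (1:ℝ)) with hp
  have hAp : A *ᵥ p = fun _ => 1 := by
    rw [hp, Matrix.mulVec_mulVec, Matrix.mul_nonsing_inv _ (isUnit_iff_ne_zero.mpr hdet),
      Matrix.one_mulVec]
  have hpnn : ∀ i, 0 ≤ p i := by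
    intro i
    rw [hp, Matrix.mulVec, dotProduct]
    exact Finset.sum_nonneg fun j _ => by simpa using hinv i j
  refine ⟨p, fun i => ?_, fun j => by rw [hAp]⟩
  have h1 : (A *ᵥ p) i = 1 := by rw [hAp]
  have h2 : (A *ᵥ p) i = s * p i - ∑ k, N i k * p k := by
    simp only [hAdef, Matrix.sub_mulVec, Matrix.smul_mulVec, Matrix.one_mulVec,
      Pi.sub_apply, Pi.smul_apply, smul_eq_mul]
    rw [Matrix.mulVec, dotProduct]
  have h3 : 0 ≤ ∑ k, N i k * p k :=
    Finset.sum_nonneg fun k _ => mul_nonneg (hN i k) (hpnn k)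
  rw [h2] at h1
  by_contra hle
  push_neg at hle
  nlinarith

lemma sign_mul_self' (x : ℝ) : Real.sign x * x = |x| := by
  rcases lt_trichotomy x 0 with h | h | h
  · rw [Real.sign_of_neg h, abs_of_neg h]; ring
  · simp [h]
  · rw [Real.sign_of_pos h, abs_of_pos h]; ring

lemma abs_sign_le' (x : ℝ) : |Real.sign x| ≤ 1 := by
  rcases lt_trichotomy x 0 with h | h | h
  · rw [Real.sign_of_neg h]; norm_num
  · simp [h]
  · rw [Real.sign_of_pos h]; norm_num

end Aux

set_option maxHeartbeats 1000000 in
theorem stmt2 {m : ℕ} (hm : 1 ≤ m)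
    (lo : Fin m → ℝ) (hi : Fin m → Fin m → ℝ)
    (hlo : ∀ i, 0 < lo i) (hhi : ∀ i j, 0 ≤ hi i j) (hdiag : ∀ i, lo i ≤ hi i i)
    (hB : IsMMatrix (boundaryMatrix lo hi)) :
    ∀ k : Fin m → ℝ, (∀ i, 0 < k i) →
      ∃ p : Fin m → ℝ, (∀ i, 0 < p i) ∧
        ∀ Υ : Matrix (Fin m) (Fin m) ℝ, SatisfiesBounds lo hi Υ →
          ∀ x : Fin m → ℝ, x ≠ 0 →
            0 < ∑ i, ∑ j,
              Real.sign (x i) * ((Matrix.diagonal p * Υ * Matrix.diagonal k) i j) * x j := by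
  intro k hk
  haveI : NeZero m := ⟨by omega⟩
  set B := boundaryMatrix lo hi with hBdef
  set s : ℝ := 1 + ∑ i, lo i with hsdef
  have hsum_nn : (0:ℝ) ≤ ∑ i, lo i := Finset.sum_nonneg fun i _ => (hlo i).le
  have hs : 0 < s := by rw [hsdef]; linarith
  have hslo : ∀ i, lo i < s := by
    intro i
    have h1 : lo i ≤ ∑ j, lo j :=
      Finset.single_le_sum (fun j _ => (hlo j).le) (Finset.mem_univ i)
    rw [hsdef]; linarith
  set N : Matrix (Fin m) (Fin m) ℝ := s • 1 - B.transpose with hNdef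
  have hNent : ∀ i j, 0 ≤ N i j := by
    intro i j
    by_cases h : i = j
    · subst h
      have : N i i = s - lo i := by
        simp [hNdef, hBdef, boundaryMatrix, Matrix.sub_apply, Matrix.smul_apply,
          Matrix.one_apply, Matrix.transpose_apply]
      rw [this]; linarith [hslo i]
    · have : N i j = hi j i := by
        simp [hNdef, hBdef, boundaryMatrix, Matrix.sub_apply, Matrix.smul_apply,
          Matrix.one_apply, Matrix.transpose_apply, h, Ne.symm h]
      rw [this]; exact hhi j i
  have hBt : s • (1 : Matrix (Fin m) (Fin m) ℝ) - N = B.transpose := by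
    rw [hNdef]; abel
  have hroot : ∀ z : ℂ,
      ((s • (1 : Matrix (Fin m) (Fin m) ℝ) - N).map Complex.ofReal).charpoly.IsRoot z →
        0 < z.re := by
    intro z hz
    apply hB.2 z
    rw [hBt, Matrix.transpose_map, charpoly_transpose'] at hz
    exact hz
  obtain ⟨p, hppos, hp1⟩ := exists_pos_mulVec N hNent hs hroot
  rw [hBt] at hp1
  have hp1' : ∀ j, ∑ i, p i * B i j = 1 := by
    intro j
    have h := hp1 j
    rw [Matrix.mulVec, dotProduct] at h
    simpa [Matrix.transpose_apply, mul_comm] using h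
  refine ⟨p, hppos, ?_⟩
  intro Υ hΥ x hx
  obtain ⟨j0, hj0⟩ : ∃ j, x j ≠ 0 := Function.ne_iff.mp hx
  have hentry : ∀ i j, (Matrix.diagonal p * Υ * Matrix.diagonal k) i j = p i * Υ i j * k j := by
    intro i j
    rw [Matrix.mul_diagonal, Matrix.diagonal_mul]
  have hterm : ∀ j i, (p i * B i j) * (k j * |x j|) ≤
      Real.sign (x i) * (p i * Υ i j * k j) * x j := by
    intro j i
    by_cases h : i = j
    · subst h
      have h1 : Real.sign (x i) * (p i * Υ i i * k i) * x i =
          (p i * Υ i i * k i) * |x i| := by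
        rw [← sign_mul_self' (x i)]; ring
      have hBii : B i i = lo i := by simp [hBdef, boundaryMatrix]
      rw [h1, hBii]
      have h2 := hΥ.1 i
      have h3 : p i * lo i * (k i * |x i|) ≤ p i * Υ i i * (k i * |x i|) :=
        mul_le_mul_of_nonneg_right (mul_le_mul_of_nonneg_left h2 (hppos i).le)
          (mul_nonneg (hk i).le (abs_nonneg (x i)))
      have h4 : p i * Υ i i * (k i * |x i|) = p i * Υ i i * k i * |x i| := by ring
      linarith
    · have hBij : B i j = -(hi i j) := by simp [hBdef, boundaryMatrix, h]
      have habs : |Real.sign (x i) * (p i * Υ i j * k j) * x j| ≤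
          p i * hi i j * (k j * |x j|) := by
        rw [abs_mul, abs_mul]
        have hsle := abs_sign_le' (x i)
        have hY := hΥ.2 i j
        have hY0 : (0:ℝ) ≤ |Υ i j| := abs_nonneg _
        have h3 : |p i * Υ i j * k j| ≤ p i * hi i j * k j := by
          rw [abs_mul, abs_mul, abs_of_pos (hppos i), abs_of_pos (hk j)]
          exact mul_le_mul_of_nonneg_right
            (mul_le_mul_of_nonneg_left hY (hppos i).le) (hk j).le
        calc |Real.sign (x i)| * |p i * Υ i j * k j| * |x j|
            ≤ 1 * (p i * hi i j * k j) * |x j| := by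
              apply mul_le_mul_of_nonneg_right _ (abs_nonneg (x j))
              exact mul_le_mul hsle h3 (abs_nonneg _) zero_le_one
          _ = p i * hi i j * (k j * |x j|) := by ring
      calc (p i * B i j) * (k j * |x j|)
          = -(p i * hi i j * (k j * |x j|)) := by rw [hBij]; ring
        _ ≤ -|Real.sign (x i) * (p i * Υ i j * k j) * x j| := neg_le_neg habs
        _ ≤ Real.sign (x i) * (p i * Υ i j * k j) * x j := neg_abs_le _
  have hform : ∑ i, ∑ j, Real.sign (x i) * ((Matrix.diagonal p * Υ * Matrix.diagonal k) i j) * x j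
      = ∑ i, ∑ j, Real.sign (x i) * (p i * Υ i j * k j) * x j := by
    refine Finset.sum_congr rfl fun i _ => Finset.sum_congr rfl fun j _ => ?_
    rw [hentry]
  rw [hform]
  calc (0:ℝ) < ∑ j, k j * |x j| := by
        refine Finset.sum_pos' (fun j _ => mul_nonneg (hk j).le (abs_nonneg _))
          ⟨j0, Finset.mem_univ j0, mul_pos (hk j0) (abs_pos.mpr hj0)⟩
    _ = ∑ j, (∑ i, p i * B i j) * (k j * |x j|) := by
        refine Finset.sum_congr rfl fun j _ => ?_
        rw [hp1' j, one_mul]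
    _ = ∑ j, ∑ i, (p i * B i j) * (k j * |x j|) := by
        refine Finset.sum_congr rfl fun j _ => ?_
        rw [Finset.sum_mul]
    _ ≤ ∑ j, ∑ i, Real.sign (x i) * (p i * Υ i j * k j) * x j :=
        Finset.sum_le_sum fun j _ => Finset.sum_le_sum fun i _ => hterm j i
    _ = ∑ i, ∑ j, Real.sign (x i) * (p i * Υ i j * k j) * x j := Finset.sum_comm
end

section
/- Let l ∈ [−1,0], let P = diag(p_1,…,p_m) be a positive diagonal matrix, let K_o = [k_{ij}] ∈ ℝ^{m×m} be a matrix with zero diagonal entries (k_{ii} = 0), and let Υ satisfy the interval bounds. Let Ῡ = [ῡ_{ij}] be the matrix of upper bounds and |K_o| the entrywise absolute value of K_o. Define H_o = ((1+l)/(2+l))·P Ῡ |K_o| + (1/(2+l))·|K_o|ᵀ Ῡᵀ P. Then for every x ∈ ℝ^m: ⌈x⌋^{1+l,T} P Υ K_o x ≤ Σ_{i=1}^m Σ_{j=1}^m |x_i|^{2+l} (H_o)_{ij}, and moreover Σ_{i,j} |x_i|^{2+l} (H_o)_{ij} ≥ 0. -/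
open Matrix BigOperators Finset

/-- Signed power: ⌈x⌋^d = |x|^d · sign x. -/
noncomputable def spow (x d : ℝ) : ℝ := |x| ^ d * Real.sign x

/-! Each term `⌈x_i⌋^(1+l) (PΥK_o)_{ij} x_j` is bounded by `M_{ij} |x_i|^(1+l) |x_j|` with
`M = P Ῡ |K_o| ≥ 0`, and weighted AM–GM (Young) splits `|x_i|^(1+l) |x_j|` into
`(1+l)/(2+l) |x_i|^(2+l) + 1/(2+l) |x_j|^(2+l)`. Summing, the second weight lands on `Mᵀ`,
which is the second summand of `H_o`. -/

theorem Real.rpow_mul_le_weighted_add_rpow {q a b : ℝ} (hq : 0 ≤ q) (ha : 0 ≤ a) (hb : 0 ≤ b) :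
    a ^ q * b ≤ q / (q + 1) * a ^ (q + 1) + 1 / (q + 1) * b ^ (q + 1) := by
  have hq1 : 0 < q + 1 := by linarith
  have key := Real.geom_mean_le_arith_mean2_weighted (div_nonneg hq hq1.le)
    (one_div_nonneg.2 hq1.le) (Real.rpow_nonneg ha (q + 1)) (Real.rpow_nonneg hb (q + 1))
    (by field_simp)
  rwa [← Real.rpow_mul ha, ← Real.rpow_mul hb, mul_div_cancel₀ _ hq1.ne',
    mul_one_div_cancel hq1.ne', Real.rpow_one] at key

theorem abs_spow_le (x d : ℝ) : |spow x d| ≤ |x| ^ d := by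
  rw [spow, abs_mul, abs_of_nonneg (Real.rpow_nonneg (abs_nonneg x) d)]
  refine mul_le_of_le_one_right (Real.rpow_nonneg (abs_nonneg x) d) ?_
  rcases Real.sign_apply_eq x with h | h | h <;> simp [h]

theorem spow_mul_mul_le_weighted {a n b M q : ℝ} (hq : 0 ≤ q) (hn : |n| ≤ M) :
    spow a q * n * b ≤ M * (q / (q + 1) * |a| ^ (q + 1) + 1 / (q + 1) * |b| ^ (q + 1)) :=
  calc spow a q * n * b ≤ |spow a q| * |n| * |b| := by
        rw [← abs_mul, ← abs_mul]; exact le_abs_self _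
    _ ≤ |a| ^ q * M * |b| := by gcongr; exact abs_spow_le a q
    _ = M * (|a| ^ q * |b|) := by ring
    _ ≤ _ := mul_le_mul_of_nonneg_left
        (Real.rpow_mul_le_weighted_add_rpow hq (abs_nonneg a) (abs_nonneg b))
        ((abs_nonneg n).trans hn)

namespace Matrix

variable {ι : Type*} [Fintype ι]

theorem abs_mul_apply_le {A A' B B' : Matrix ι ι ℝ} (hA : ∀ i k, |A i k| ≤ A' i k)
    (hB : ∀ k j, |B k j| ≤ B' k j) (i j : ι) : |(A * B) i j| ≤ (A' * B') i j := by
  rw [mul_apply, mul_apply]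
  refine (abs_sum_le_sum_abs _ _).trans (sum_le_sum fun k _ => ?_)
  rw [abs_mul]
  exact mul_le_mul (hA i k) (hB k j) (abs_nonneg _) ((abs_nonneg _).trans (hA i k))

theorem sum_sum_mul_smul_add_smul_transpose (w : ι → ℝ) (c d : ℝ) (M : Matrix ι ι ℝ) :
    ∑ i, ∑ j, w i * (c • M + d • Mᵀ) i j = ∑ i, ∑ j, M i j * (c * w i + d * w j) := by
  simp only [add_apply, smul_apply, transpose_apply, smul_eq_mul, mul_add, sum_add_distrib]
  rw [sum_comm (f := fun i j => w i * (d * M j i))]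
  congr 1 <;> exact sum_congr rfl fun i _ => sum_congr rfl fun j _ => by ring

end Matrix

theorem stmt4_general {m : ℕ} (l : ℝ) (hl : l ∈ Set.Icc (-1 : ℝ) 0)
    (lo : Fin m → ℝ) (hi : Fin m → Fin m → ℝ)
    (p : Fin m → ℝ) (hp : ∀ i, 0 < p i)
    (Ko : Matrix (Fin m) (Fin m) ℝ)
    (Υ : Matrix (Fin m) (Fin m) ℝ) (hΥ : SatisfiesBounds lo hi Υ)
    (Ῡ absKo Ho : Matrix (Fin m) (Fin m) ℝ)
    (hῩ : Ῡ = Matrix.of fun i j => hi i j)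
    (habs : absKo = Matrix.of fun i j => |Ko i j|)
    (hHo : Ho = ((1 + l) / (2 + l)) • (Matrix.diagonal p * Ῡ * absKo) +
        (1 / (2 + l)) • (absKoᵀ * Ῡᵀ * Matrix.diagonal p)) :
    ∀ x : Fin m → ℝ,
      (∑ i, ∑ j, spow (x i) (1 + l) * ((Matrix.diagonal p * Υ * Ko) i j) * x j ≤
        ∑ i, ∑ j, |x i| ^ (2 + l) * Ho i j) ∧
      0 ≤ ∑ i, ∑ j, |x i| ^ (2 + l) * Ho i j := by
  intro x
  set M := diagonal p * Ῡ * absKo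
  have hq : 0 ≤ 1 + l := by linarith [hl.1]
  have hM : ∀ i j, |(diagonal p * Υ * Ko) i j| ≤ M i j := by
    refine abs_mul_apply_le (abs_mul_apply_le (fun i k => ?_) (fun i k => ?_)) (fun i k => ?_)
    · by_cases h : i = k <;> simp [h, abs_of_pos (hp k)]
    · simpa [hῩ] using hΥ.2 i k
    · simp [habs]
  rw [show (2 : ℝ) + l = 1 + l + 1 by ring] at hHo ⊢
  have hHoM : Ho = ((1 + l) / (1 + l + 1)) • M + (1 / (1 + l + 1)) • Mᵀ := by
    rw [hHo, transpose_mul, transpose_mul, diagonal_transpose, Matrix.mul_assoc]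
  rw [hHoM, sum_sum_mul_smul_add_smul_transpose]
  refine ⟨sum_le_sum fun i _ => sum_le_sum fun j _ => spow_mul_mul_le_weighted hq (hM i j), ?_⟩
  have hq1 : 0 < 1 + l + 1 := by linarith
  exact sum_nonneg fun i _ => sum_nonneg fun j _ =>
    mul_nonneg ((abs_nonneg _).trans (hM i j)) (by positivity)

theorem stmt4 {m : ℕ} (hm : 1 ≤ m) (l : ℝ) (hl : l ∈ Set.Icc (-1 : ℝ) 0)
    (lo : Fin m → ℝ) (hi : Fin m → Fin m → ℝ)
    (hlo : ∀ i, 0 < lo i) (hhi : ∀ i j, 0 ≤ hi i j) (hdiag : ∀ i, lo i ≤ hi i i)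
    (p : Fin m → ℝ) (hp : ∀ i, 0 < p i)
    (Ko : Matrix (Fin m) (Fin m) ℝ) (hKo : ∀ i, Ko i i = 0)
    (Υ : Matrix (Fin m) (Fin m) ℝ) (hΥ : SatisfiesBounds lo hi Υ)
    (Ῡ absKo Ho : Matrix (Fin m) (Fin m) ℝ)
    (hῩ : Ῡ = Matrix.of fun i j => hi i j)
    (habs : absKo = Matrix.of fun i j => |Ko i j|)
    (hHo : Ho = ((1 + l) / (2 + l)) • (Matrix.diagonal p * Ῡ * absKo) +
        (1 / (2 + l)) • (absKoᵀ * Ῡᵀ * Matrix.diagonal p)) :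
    ∀ x : Fin m → ℝ,
      (∑ i, ∑ j, spow (x i) (1 + l) * ((Matrix.diagonal p * Υ * Ko) i j) * x j ≤
        ∑ i, ∑ j, |x i| ^ (2 + l) * Ho i j) ∧
      0 ≤ ∑ i, ∑ j, |x i| ^ (2 + l) * Ho i j :=
  stmt4_general l hl lo hi p hp Ko Υ hΥ Ῡ absKo Ho hῩ habs hHo
end

section
/- Let l ∈ [−1,0], let W be as given (with positive diagonal P and symmetric positive definite Γ), let Γ̃, M ∈ ℝ^{m×m} and μ > 0, and suppose that V(x,x_I) = (2/(2−l))·μ·W(x,x_I)^{(2−l)/2} − x_Iᵀ M x satisfies V(x,x_I) > 0 for every (x,x_I) ≠ (0,0). Define ρ(x,x_I) = W(x,x_I)^{−l/2}·Γ̃ᵀ x_I − M x ∈ ℝ^m. Then there exists a constant ϱ ≥ 0 such that ‖ρ(x,x_I)‖ ≤ ϱ·V(x,x_I)^{(1−l)/(2−l)} for all (x,x_I) ∈ ℝ^m × ℝ^m. -/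
open Matrix BigOperators Finset

/-- The weak Lyapunov function W. -/
noncomputable def Wfun {m : ℕ} (l : ℝ) (p : Fin m → ℝ) (Γ : Matrix (Fin m) (Fin m) ℝ)
    (x xI : Fin m → ℝ) : ℝ :=
  ((1 - l) / 2) * ∑ i, p i * |x i| ^ (2 / (1 - l)) + (1 / 2) * (xI ⬝ᵥ (Γ *ᵥ xI))

/-- The strong Lyapunov function V. -/
noncomputable def Vfun {m : ℕ} (l : ℝ) (p : Fin m → ℝ) (Γ M : Matrix (Fin m) (Fin m) ℝ)
    (μ : ℝ) (x xI : Fin m → ℝ) : ℝ :=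
  (2 / (2 - l)) * μ * (Wfun l p Γ x xI) ^ ((2 - l) / 2) - xI ⬝ᵥ (M *ᵥ x)

lemma rpow_two' (t : ℝ) : t ^ (2:ℝ) = t * t := by
  rw [show (2:ℝ) = ((2:ℕ):ℝ) by norm_num, Real.rpow_natCast]; ring

lemma Wfun_nonneg {m : ℕ} {l : ℝ} (hl : l ≤ 0) {p : Fin m → ℝ} (hp : ∀ i, 0 < p i)
    {Γ : Matrix (Fin m) (Fin m) ℝ} (hΓ : Γ.PosDef) (x xI : Fin m → ℝ) :
    0 ≤ Wfun l p Γ x xI := by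
  have hsum : 0 ≤ ∑ i, p i * |x i| ^ (2 / (1-l)) :=
    Finset.sum_nonneg fun i _ => mul_nonneg (hp i).le (Real.rpow_nonneg (abs_nonneg _) _)
  have hq : 0 ≤ xI ⬝ᵥ Γ *ᵥ xI := hΓ.posSemidef.dotProduct_mulVec_nonneg xI
  have h1 : (0:ℝ) < 1 - l := by linarith
  unfold Wfun
  nlinarith

lemma Wfun_pos {m : ℕ} {l : ℝ} (hl : l ≤ 0) {p : Fin m → ℝ} (hp : ∀ i, 0 < p i)
    {Γ : Matrix (Fin m) (Fin m) ℝ} (hΓ : Γ.PosDef) (x xI : Fin m → ℝ)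
    (h : ¬(x = 0 ∧ xI = 0)) : 0 < Wfun l p Γ x xI := by
  have h1 : (0:ℝ) < 1 - l := by linarith
  have hsum : 0 ≤ ∑ i, p i * |x i| ^ (2 / (1-l)) :=
    Finset.sum_nonneg fun i _ => mul_nonneg (hp i).le (Real.rpow_nonneg (abs_nonneg _) _)
  have hq : 0 ≤ xI ⬝ᵥ Γ *ᵥ xI := hΓ.posSemidef.dotProduct_mulVec_nonneg xI
  unfold Wfun
  rcases not_and_or.1 h with hx | hxI
  · obtain ⟨i, hi⟩ := Function.ne_iff.1 hx
    simp only [Pi.zero_apply] at hi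
    have hterm : 0 < p i * |x i| ^ (2 / (1-l)) :=
      mul_pos (hp i) (Real.rpow_pos_of_pos (abs_pos.2 hi) _)
    have hpos : 0 < ∑ i, p i * |x i| ^ (2 / (1-l)) :=
      Finset.sum_pos' (fun j _ => mul_nonneg (hp j).le (Real.rpow_nonneg (abs_nonneg _) _))
        ⟨i, Finset.mem_univ i, hterm⟩
    nlinarith
  · have := hΓ.dotProduct_mulVec_pos hxI
    rw [star_trivial] at this
    nlinarith

noncomputable def gfun {m : ℕ} (l : ℝ) (p : Fin m → ℝ) (Γ Γt M : Matrix (Fin m) (Fin m) ℝ)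
    (x xI : Fin m → ℝ) : ℝ :=
  Real.sqrt (∑ i, ((Wfun l p Γ x xI) ^ (-l / 2) * (Γtᵀ *ᵥ xI) i - (M *ᵥ x) i) ^ 2)

lemma Wfun_scale {m : ℕ} {l : ℝ} (hl : l ≤ 0) (p : Fin m → ℝ) (Γ : Matrix (Fin m) (Fin m) ℝ)
    {t : ℝ} (ht : 0 < t) (x xI : Fin m → ℝ) :
    Wfun l p Γ (t ^ (1 - l) • x) (t • xI) = t ^ (2:ℝ) * Wfun l p Γ x xI := by
  have h1 : (0:ℝ) < 1 - l := by linarith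
  have htl : (0:ℝ) < t ^ (1 - l) := Real.rpow_pos_of_pos ht _
  have key : ∀ i, |(t ^ (1 - l) • x) i| ^ (2 / (1 - l)) = t ^ (2:ℝ) * |x i| ^ (2 / (1 - l)) := by
    intro i
    rw [Pi.smul_apply, smul_eq_mul, abs_mul, abs_of_pos htl,
        Real.mul_rpow htl.le (abs_nonneg _), ← Real.rpow_mul ht.le]
    rw [show (1 - l) * (2 / (1 - l)) = 2 by field_simp]
  have hq : (t • xI) ⬝ᵥ Γ *ᵥ (t • xI) = t ^ (2:ℝ) * (xI ⬝ᵥ Γ *ᵥ xI) := by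
    rw [Matrix.mulVec_smul, dotProduct_smul, smul_dotProduct, rpow_two',
      smul_eq_mul, smul_eq_mul]
    ring
  unfold Wfun
  simp only [key, hq]
  have : ∀ i ∈ Finset.univ, p i * (t ^ (2:ℝ) * |x i| ^ (2 / (1 - l)))
      = t ^ (2:ℝ) * (p i * |x i| ^ (2 / (1 - l))) := fun i _ => by ring
  rw [Finset.sum_congr rfl this, ← Finset.mul_sum]
  ring

lemma Vfun_scale {m : ℕ} {l : ℝ} (hl : l ≤ 0) {p : Fin m → ℝ} (hp : ∀ i, 0 < p i)
    {Γ : Matrix (Fin m) (Fin m) ℝ} (hΓ : Γ.PosDef) (M : Matrix (Fin m) (Fin m) ℝ) (μ : ℝ)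
    {t : ℝ} (ht : 0 < t) (x xI : Fin m → ℝ) :
    Vfun l p Γ M μ (t ^ (1 - l) • x) (t • xI) = t ^ (2 - l) * Vfun l p Γ M μ x xI := by
  have hW := Wfun_nonneg hl hp hΓ x xI
  unfold Vfun
  rw [Wfun_scale hl p Γ ht x xI,
    Real.mul_rpow (Real.rpow_pos_of_pos ht 2).le hW, ← Real.rpow_mul ht.le,
    show (2:ℝ) * ((2 - l) / 2) = 2 - l by ring]
  have hbil : (t • xI) ⬝ᵥ M *ᵥ (t ^ (1 - l) • x)
      = t ^ (2 - l) * (xI ⬝ᵥ M *ᵥ x) := by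
    rw [Matrix.mulVec_smul, dotProduct_smul, smul_dotProduct,
      smul_eq_mul, smul_eq_mul, show (2:ℝ) - l = 1 + (1 - l) by ring,
      Real.rpow_add ht, Real.rpow_one]
    ring
  rw [hbil]
  ring

lemma gfun_scale {m : ℕ} {l : ℝ} (hl : l ≤ 0) {p : Fin m → ℝ} (hp : ∀ i, 0 < p i)
    {Γ : Matrix (Fin m) (Fin m) ℝ} (hΓ : Γ.PosDef) (Γt M : Matrix (Fin m) (Fin m) ℝ)
    {t : ℝ} (ht : 0 < t) (x xI : Fin m → ℝ) :
    gfun l p Γ Γt M (t ^ (1 - l) • x) (t • xI) = t ^ (1 - l) * gfun l p Γ Γt M x xI := by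
  have hW := Wfun_nonneg hl hp hΓ x xI
  have htl : (0:ℝ) < t ^ (1 - l) := Real.rpow_pos_of_pos ht _
  have htt : t ^ (-l) * t = t ^ (1 - l) := by
    nth_rewrite 2 [← Real.rpow_one t]
    rw [← Real.rpow_add ht, show -l + 1 = 1 - l by ring]
  have key : ∀ i, Wfun l p Γ (t ^ (1 - l) • x) (t • xI) ^ (-l / 2) * (Γtᵀ *ᵥ (t • xI)) i
      - (M *ᵥ (t ^ (1 - l) • x)) i
      = t ^ (1 - l) * (Wfun l p Γ x xI ^ (-l / 2) * (Γtᵀ *ᵥ xI) i - (M *ᵥ x) i) := by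
    intro i
    rw [Wfun_scale hl p Γ ht x xI, Matrix.mulVec_smul, Matrix.mulVec_smul,
      Real.mul_rpow (Real.rpow_pos_of_pos ht 2).le hW, ← Real.rpow_mul ht.le,
      show (2:ℝ) * (-l / 2) = -l by ring]
    simp only [Pi.smul_apply, smul_eq_mul]
    rw [← htt]
    ring
  unfold gfun
  simp only [key]
  have : ∀ i ∈ Finset.univ,
      (t ^ (1 - l) * (Wfun l p Γ x xI ^ (-l / 2) * (Γtᵀ *ᵥ xI) i - (M *ᵥ x) i)) ^ 2
      = (t ^ (1 - l)) ^ 2 * (Wfun l p Γ x xI ^ (-l / 2) * (Γtᵀ *ᵥ xI) i - (M *ᵥ x) i) ^ 2 :=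
    fun i _ => by ring
  rw [Finset.sum_congr rfl this, ← Finset.mul_sum, Real.sqrt_mul (sq_nonneg _),
    Real.sqrt_sq htl.le]

lemma cont_mulVec_apply {m : ℕ} (A : Matrix (Fin m) (Fin m) ℝ) (i : Fin m) :
    Continuous fun v : Fin m → ℝ => (A *ᵥ v) i := by
  simp only [Matrix.mulVec, dotProduct]
  exact continuous_finset_sum _ fun j _ => continuous_const.mul (continuous_apply j)

lemma cont_quad {m : ℕ} (A : Matrix (Fin m) (Fin m) ℝ) :
    Continuous fun z : (Fin m → ℝ) × (Fin m → ℝ) => z.2 ⬝ᵥ A *ᵥ z.1 := by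
  simp only [dotProduct]
  exact continuous_finset_sum _ fun i _ =>
    ((continuous_apply i).comp continuous_snd).mul
      ((cont_mulVec_apply A i).comp continuous_fst)

lemma contW {m : ℕ} {l : ℝ} (hl : l ≤ 0) (p : Fin m → ℝ) (Γ : Matrix (Fin m) (Fin m) ℝ) :
    Continuous fun z : (Fin m → ℝ) × (Fin m → ℝ) => Wfun l p Γ z.1 z.2 := by
  have h1 : (0:ℝ) < 1 - l := by linarith
  unfold Wfun
  apply Continuous.add
  · exact continuous_const.mul (continuous_finset_sum _ fun i _ =>
      continuous_const.mul
        ((((continuous_apply i).comp continuous_fst).abs).rpow_const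
          fun z => Or.inr (div_nonneg (by norm_num) h1.le)))
  · exact continuous_const.mul ((cont_quad Γ).comp (continuous_snd.prodMk continuous_snd))

lemma contV {m : ℕ} {l : ℝ} (hl : l ≤ 0) (p : Fin m → ℝ) (Γ M : Matrix (Fin m) (Fin m) ℝ)
    (μ : ℝ) :
    Continuous fun z : (Fin m → ℝ) × (Fin m → ℝ) => Vfun l p Γ M μ z.1 z.2 := by
  unfold Vfun
  exact (continuous_const.mul ((contW hl p Γ).rpow_const fun z => Or.inr (by linarith))).sub
    (cont_quad M)

lemma contG {m : ℕ} {l : ℝ} (hl : l ≤ 0) (p : Fin m → ℝ) (Γ Γt M : Matrix (Fin m) (Fin m) ℝ) :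
    Continuous fun z : (Fin m → ℝ) × (Fin m → ℝ) => gfun l p Γ Γt M z.1 z.2 := by
  unfold gfun
  apply Real.continuous_sqrt.comp
  exact continuous_finset_sum _ fun i _ =>
    ((((contW hl p Γ).rpow_const fun z => Or.inr (by linarith)).mul
      ((cont_mulVec_apply Γtᵀ i).comp continuous_snd)).sub
      ((cont_mulVec_apply M i).comp continuous_fst)).pow 2

lemma quad_lower {m : ℕ} (i0 : Fin m) {Γ : Matrix (Fin m) (Fin m) ℝ} (hΓ : Γ.PosDef) :
    ∃ c : ℝ, 0 < c ∧ ∀ v : Fin m → ℝ, c * (∑ i, v i ^ 2) ≤ v ⬝ᵥ Γ *ᵥ v := by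
  set T : Set (Fin m → ℝ) := {v | ∑ i, v i ^ 2 = 1} with hT
  have hTc : IsClosed T :=
    isClosed_eq (continuous_finset_sum _ fun i _ => (continuous_apply i).pow 2) continuous_const
  have hTb : Bornology.IsBounded T := by
    apply (Metric.isBounded_closedBall (x := (0 : Fin m → ℝ)) (r := 1)).subset
    intro v hv
    simp only [Metric.mem_closedBall, dist_zero_right]
    rw [pi_norm_le_iff_of_nonneg zero_le_one]
    intro i
    have h1 : v i ^ 2 ≤ 1 := by
      have h2 : v i ^ 2 ≤ ∑ j, v j ^ 2 := Finset.single_le_sum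
        (f := fun j => v j ^ 2) (fun j _ => sq_nonneg _) (Finset.mem_univ i)
      have h3 : ∑ j, v j ^ 2 = 1 := hv
      linarith
    rw [Real.norm_eq_abs]
    nlinarith [abs_nonneg (v i), sq_abs (v i)]
  have hTcomp : IsCompact T := Metric.isCompact_of_isClosed_isBounded hTc hTb
  have hne : T.Nonempty := by
    refine ⟨Pi.single i0 1, ?_⟩
    have : ∀ j ∈ Finset.univ, (Pi.single i0 1 : Fin m → ℝ) j ^ 2
        = if j = i0 then 1 else 0 := by
      intro j _
      rcases eq_or_ne j i0 with h | h <;> simp [h, Pi.single_apply]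
    show ∑ j, (Pi.single i0 1 : Fin m → ℝ) j ^ 2 = 1
    rw [Finset.sum_congr rfl this, Finset.sum_ite_eq' Finset.univ i0 (fun _ => (1:ℝ))]
    simp
  have hcont : Continuous fun v : Fin m → ℝ => v ⬝ᵥ Γ *ᵥ v :=
    (cont_quad Γ).comp (continuous_id.prodMk continuous_id)
  obtain ⟨v0, hv0T, hmin⟩ := hTcomp.exists_isMinOn hne hcont.continuousOn
  have hv0ne : v0 ≠ 0 := by
    intro h
    have : ∑ i, v0 i ^ 2 = 1 := hv0T
    rw [h] at this
    simp at this
  refine ⟨v0 ⬝ᵥ Γ *ᵥ v0, ?_, ?_⟩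
  · have := hΓ.dotProduct_mulVec_pos hv0ne
    rwa [star_trivial] at this
  · intro v
    by_cases hv : ∑ i, v i ^ 2 = 0
    · have hv0 : v = 0 := by
        funext i
        have := (Finset.sum_eq_zero_iff_of_nonneg (fun j _ => sq_nonneg (v j))).1 hv i
          (Finset.mem_univ i)
        exact pow_eq_zero_iff (by norm_num) |>.1 this
      rw [hv0]
      simp
    · have hs2 : 0 < ∑ i, v i ^ 2 :=
        lt_of_le_of_ne (Finset.sum_nonneg fun j _ => sq_nonneg _) (Ne.symm hv)
      set s := Real.sqrt (∑ i, v i ^ 2) with hs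
      have hspos : 0 < s := Real.sqrt_pos.2 hs2
      have hssq : s ^ 2 = ∑ i, v i ^ 2 := Real.sq_sqrt hs2.le
      have hu : (s⁻¹ • v) ∈ T := by
        show ∑ i, (s⁻¹ • v) i ^ 2 = 1
        have : ∀ i ∈ Finset.univ, (s⁻¹ • v) i ^ 2 = s⁻¹ ^ 2 * v i ^ 2 := by
          intro i _; simp [Pi.smul_apply, smul_eq_mul]; ring
        rw [Finset.sum_congr rfl this, ← Finset.mul_sum, ← hssq]
        field_simp
      have hq : (s⁻¹ • v) ⬝ᵥ Γ *ᵥ (s⁻¹ • v) = s⁻¹ ^ 2 * (v ⬝ᵥ Γ *ᵥ v) := by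
        rw [Matrix.mulVec_smul, dotProduct_smul, smul_dotProduct,
          smul_eq_mul, smul_eq_mul]
        ring
      have h3 := hmin hu
      simp only [Set.mem_setOf_eq] at h3
      rw [hq] at h3
      have h4 : (v0 ⬝ᵥ Γ *ᵥ v0) * (s ^ 2) ≤ s⁻¹ ^ 2 * (v ⬝ᵥ Γ *ᵥ v) * s ^ 2 := by
        apply mul_le_mul_of_nonneg_right h3 (by positivity)
      have h5 : s⁻¹ ^ 2 * (v ⬝ᵥ Γ *ᵥ v) * s ^ 2 = v ⬝ᵥ Γ *ᵥ v := by
        field_simp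
      rw [h5, hssq] at h4
      linarith

lemma exists_norm {m : ℕ} {l : ℝ} (hl : l ≤ 0) {p : Fin m → ℝ} (hp : ∀ i, 0 < p i)
    {Γ : Matrix (Fin m) (Fin m) ℝ} (hΓ : Γ.PosDef) (x xI : Fin m → ℝ)
    (h : ¬(x = 0 ∧ xI = 0)) :
    ∃ t : ℝ, 0 < t ∧ Wfun l p Γ (t ^ (1 - l) • x) (t • xI) = 1 := by
  have hw := Wfun_pos hl hp hΓ x xI h
  refine ⟨(Wfun l p Γ x xI) ^ (-(1/2) : ℝ), Real.rpow_pos_of_pos hw _, ?_⟩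
  rw [Wfun_scale hl p Γ (Real.rpow_pos_of_pos hw _) x xI, ← Real.rpow_mul hw.le,
    show (-(1/2) : ℝ) * 2 = -1 by norm_num, Real.rpow_neg_one]
  exact inv_mul_cancel₀ hw.ne'

theorem stmt15 {m : ℕ} (l : ℝ) (hl : l ∈ Set.Icc (-1 : ℝ) 0)
    (p : Fin m → ℝ) (hp : ∀ i, 0 < p i)
    (Γ : Matrix (Fin m) (Fin m) ℝ) (hΓ : Γ.PosDef)
    (Γt M : Matrix (Fin m) (Fin m) ℝ) (μ : ℝ) (hμ : 0 < μ)
    (hV : ∀ x xI : Fin m → ℝ, ¬(x = 0 ∧ xI = 0) → 0 < Vfun l p Γ M μ x xI) :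
    ∃ ϱ : ℝ, 0 ≤ ϱ ∧ ∀ x xI : Fin m → ℝ,
      Real.sqrt (∑ i,
          ((Wfun l p Γ x xI) ^ (-l / 2) * (Γtᵀ *ᵥ xI) i - (M *ᵥ x) i) ^ 2) ≤
        ϱ * (Vfun l p Γ M μ x xI) ^ ((1 - l) / (2 - l)) := by
  obtain ⟨hl1, hl2⟩ := hl
  have h1l : (0:ℝ) < 1 - l := by linarith
  have h2l : (0:ℝ) < 2 - l := by linarith
  have he : (0:ℝ) < (1 - l) / (2 - l) := div_pos h1l h2l
  have hW00 : Wfun l p Γ (0 : Fin m → ℝ) 0 = 0 := by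
    unfold Wfun
    simp [Real.zero_rpow (ne_of_gt (div_pos two_pos h1l))]
  have hV00 : Vfun l p Γ M μ (0 : Fin m → ℝ) 0 = 0 := by
    unfold Vfun
    rw [hW00, Real.zero_rpow (ne_of_gt (by positivity : (0:ℝ) < (2 - l) / 2))]
    simp [Matrix.mulVec_zero]
  -- the zero case, uniform in ϱ
  have hzero : ∀ ϱ : ℝ,
      Real.sqrt (∑ i, ((Wfun l p Γ (0:Fin m → ℝ) 0) ^ (-l / 2)
          * (Γtᵀ *ᵥ (0:Fin m → ℝ)) i - (M *ᵥ (0:Fin m → ℝ)) i) ^ 2) ≤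
        ϱ * (Vfun l p Γ M μ (0:Fin m → ℝ) 0) ^ ((1 - l) / (2 - l)) := by
    intro ϱ
    rw [hV00, Real.zero_rpow he.ne', mul_zero]
    have : ∑ i, ((Wfun l p Γ (0:Fin m → ℝ) 0) ^ (-l / 2)
        * (Γtᵀ *ᵥ (0:Fin m → ℝ)) i - (M *ᵥ (0:Fin m → ℝ)) i) ^ 2 = 0 := by
      simp [Matrix.mulVec_zero]
    rw [this, Real.sqrt_zero]
  rcases Nat.eq_zero_or_pos m with hm | hm
  · refine ⟨0, le_refl 0, fun x xI => ?_⟩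
    subst hm
    have hx : x = 0 := funext fun i => i.elim0
    have hxI : xI = 0 := funext fun i => i.elim0
    rw [hx, hxI]
    exact hzero 0
  · obtain ⟨i0⟩ : Nonempty (Fin m) := ⟨⟨0, hm⟩⟩
    set S : Set ((Fin m → ℝ) × (Fin m → ℝ)) := {z | Wfun l p Γ z.1 z.2 = 1} with hS
    have hSc : IsClosed S := isClosed_eq (contW hl2 p Γ) continuous_const
    obtain ⟨c, hc, hcq⟩ := quad_lower i0 hΓ
    -- boundedness of S
    set Cx : ℝ := ∑ i, (2 / p i) ^ ((1 - l) / 2) with hCx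
    set CxI : ℝ := Real.sqrt (2 / c) with hCxI
    have hCx0 : 0 ≤ Cx :=
      Finset.sum_nonneg fun i _ => Real.rpow_nonneg (div_nonneg (by norm_num) (hp _).le) _
    have hC0 : 0 ≤ max Cx CxI := le_max_of_le_left hCx0
    have hSb : Bornology.IsBounded S := by
      apply (Metric.isBounded_closedBall
        (x := (0 : (Fin m → ℝ) × (Fin m → ℝ))) (r := max Cx CxI)).subset
      intro z hz
      have hz1 : Wfun l p Γ z.1 z.2 = 1 := hz
      have hsum : 0 ≤ ∑ i, p i * |z.1 i| ^ (2 / (1 - l)) :=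
        Finset.sum_nonneg fun i _ => mul_nonneg (hp i).le (Real.rpow_nonneg (abs_nonneg _) _)
      have hq : 0 ≤ z.2 ⬝ᵥ Γ *ᵥ z.2 := hΓ.posSemidef.dotProduct_mulVec_nonneg z.2
      have hWdef : ((1 - l) / 2) * (∑ i, p i * |z.1 i| ^ (2 / (1 - l)))
          + (1 / 2) * (z.2 ⬝ᵥ Γ *ᵥ z.2) = 1 := hz1
      have hsum2 : ∑ i, p i * |z.1 i| ^ (2 / (1 - l)) ≤ 2 := by nlinarith
      have hq2 : z.2 ⬝ᵥ Γ *ᵥ z.2 ≤ 2 := by nlinarith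
      simp only [Metric.mem_closedBall, dist_zero_right]
      rw [Prod.norm_def]
      apply max_le
      · rw [pi_norm_le_iff_of_nonneg hC0]
        intro i
        have hterm : p i * |z.1 i| ^ (2 / (1 - l)) ≤ 2 := by
          have := Finset.single_le_sum
            (f := fun j => p j * |z.1 j| ^ (2 / (1 - l)))
            (fun j _ => mul_nonneg (hp j).le (Real.rpow_nonneg (abs_nonneg _) _))
            (Finset.mem_univ i)
          linarith
        have h6 : |z.1 i| ^ (2 / (1 - l)) ≤ 2 / p i := by
          rw [le_div_iff₀ (hp i)]; linarith [hterm]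
        have h7 : |z.1 i| ≤ (2 / p i) ^ ((1 - l) / 2) := by
          have h8 := Real.rpow_le_rpow (Real.rpow_nonneg (abs_nonneg _) _) h6
            (by positivity : (0:ℝ) ≤ (1 - l) / 2)
          rwa [← Real.rpow_mul (abs_nonneg _),
            show (2 / (1 - l)) * ((1 - l) / 2) = 1 by field_simp, Real.rpow_one] at h8
        refine le_trans ?_ (le_max_left Cx CxI)
        rw [Real.norm_eq_abs]
        refine h7.trans ?_
        exact Finset.single_le_sum
          (f := fun j => (2 / p j) ^ ((1 - l) / 2))
          (fun j _ => Real.rpow_nonneg (div_nonneg (by norm_num) (hp _).le) _) (Finset.mem_univ i)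
      · rw [pi_norm_le_iff_of_nonneg hC0]
        intro i
        have h9 : c * (∑ j, z.2 j ^ 2) ≤ 2 := le_trans (hcq z.2) hq2
        have h10 : z.2 i ^ 2 ≤ 2 / c := by
          have h11 : z.2 i ^ 2 ≤ ∑ j, z.2 j ^ 2 := Finset.single_le_sum
            (f := fun j => z.2 j ^ 2) (fun j _ => sq_nonneg _) (Finset.mem_univ i)
          rw [le_div_iff₀ hc]
          nlinarith
        refine le_trans ?_ (le_max_right Cx CxI)
        rw [Real.norm_eq_abs, hCxI, ← Real.sqrt_sq_eq_abs]
        exact Real.sqrt_le_sqrt h10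
    have hScomp : IsCompact S := Metric.isCompact_of_isClosed_isBounded hSc hSb
    have hxI0 : (Pi.single i0 1 : Fin m → ℝ) ≠ 0 := by
      intro h
      have := congrFun h i0
      simp [Pi.single_apply] at this
    obtain ⟨t0, ht0, hWt0⟩ := exists_norm hl2 hp hΓ 0 (Pi.single i0 1)
      (by simp [hxI0])
    have hSne : S.Nonempty := ⟨(t0 ^ (1 - l) • (0 : Fin m → ℝ), t0 • (Pi.single i0 1 : Fin m → ℝ)), hWt0⟩
    obtain ⟨zR, hzRS, hmax⟩ := hScomp.exists_isMaxOn hSne (contG hl2 p Γ Γt M).continuousOn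
    obtain ⟨zv, hzvS, hminV⟩ := hScomp.exists_isMinOn hSne (contV hl2 p Γ M μ).continuousOn
    set R := gfun l p Γ Γt M zR.1 zR.2 with hRdef
    set v0 := Vfun l p Γ M μ zv.1 zv.2 with hv0def
    have hR0 : 0 ≤ R := Real.sqrt_nonneg _
    have hv0pos : 0 < v0 := by
      apply hV zv.1 zv.2
      rintro ⟨h1', h2'⟩
      have h3 : Wfun l p Γ zv.1 zv.2 = 1 := hzvS
      rw [h1', h2', hW00] at h3
      norm_num at h3
    set e := (1 - l) / (2 - l) with hedef
    have hv0e : 0 < v0 ^ e := Real.rpow_pos_of_pos hv0pos e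
    refine ⟨R / v0 ^ e, div_nonneg hR0 hv0e.le, fun x xI => ?_⟩
    by_cases hzc : x = 0 ∧ xI = 0
    · obtain ⟨hx, hxI⟩ := hzc
      rw [hx, hxI]
      exact hzero _
    · obtain ⟨t, ht, hWt⟩ := exists_norm hl2 hp hΓ x xI hzc
      have hti : (0:ℝ) < t⁻¹ := inv_pos.2 ht
      set y1 := t ^ (1 - l) • x with hy1
      set y2 := t • xI with hy2
      have hyS : (y1, y2) ∈ S := hWt
      have hback1 : (t⁻¹) ^ (1 - l) • y1 = x := by
        rw [hy1, smul_smul, ← Real.mul_rpow (inv_nonneg.2 ht.le) ht.le,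
          inv_mul_cancel₀ ht.ne', Real.one_rpow, one_smul]
      have hback2 : t⁻¹ • y2 = xI := by
        rw [hy2, smul_smul, inv_mul_cancel₀ ht.ne', one_smul]
      have hgx : gfun l p Γ Γt M x xI = (t⁻¹) ^ (1 - l) * gfun l p Γ Γt M y1 y2 := by
        conv_lhs => rw [← hback1, ← hback2]
        exact gfun_scale hl2 hp hΓ Γt M hti y1 y2
      have hVx : Vfun l p Γ M μ x xI = (t⁻¹) ^ (2 - l) * Vfun l p Γ M μ y1 y2 := by
        conv_lhs => rw [← hback1, ← hback2]
        exact Vfun_scale hl2 hp hΓ M μ hti y1 y2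
      have hgy : gfun l p Γ Γt M y1 y2 ≤ R := by
        have := hmax hyS
        simpa only [Set.mem_setOf_eq] using this
      have hVy : v0 ≤ Vfun l p Γ M μ y1 y2 := by
        have := hminV hyS
        simpa only [Set.mem_setOf_eq] using this
      have hVypos : 0 < Vfun l p Γ M μ y1 y2 := lt_of_lt_of_le hv0pos hVy
      show gfun l p Γ Γt M x xI ≤ R / v0 ^ e * (Vfun l p Γ M μ x xI) ^ e
      rw [hgx, hVx, Real.mul_rpow (Real.rpow_nonneg hti.le _) hVypos.le,
        ← Real.rpow_mul hti.le, show (2 - l) * e = 1 - l by rw [hedef]; field_simp]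
      have hVye : v0 ^ e ≤ (Vfun l p Γ M μ y1 y2) ^ e :=
        Real.rpow_le_rpow hv0pos.le hVy he.le
      have hkey : R ≤ R / v0 ^ e * (Vfun l p Γ M μ y1 y2) ^ e := by
        have h12 : R / v0 ^ e * v0 ^ e ≤ R / v0 ^ e * (Vfun l p Γ M μ y1 y2) ^ e :=
          mul_le_mul_of_nonneg_left hVye (div_nonneg hR0 hv0e.le)
        rwa [div_mul_cancel₀ R hv0e.ne'] at h12
      calc (t⁻¹) ^ (1 - l) * gfun l p Γ Γt M y1 y2
          ≤ (t⁻¹) ^ (1 - l) * (R / v0 ^ e * (Vfun l p Γ M μ y1 y2) ^ e) := by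
            apply mul_le_mul_of_nonneg_left (le_trans hgy hkey)
              (Real.rpow_nonneg hti.le _)
        _ = R / v0 ^ e * ((t⁻¹) ^ (1 - l) * (Vfun l p Γ M μ y1 y2) ^ e) := by ring
end
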